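/- Let A be a real n₁ × n₂ matrix of rank r with reduced SVD A = U Σ Vᵀ, and let P_T(B) = U Uᵀ B + B V Vᵀ − U Uᵀ B V Vᵀ. Then for any real n₁ × n₂ matrix B, the nuclear norm satisfies ‖P_T(B)‖_* ≤ √(2·rank(A)) · ‖B‖_F. -/

import Mathlib

/-!
`P_T(B) = B - (I - UUᵀ) B (I - VVᵀ)`, and `B ↦ (I - UUᵀ) B (I - VVᵀ)` is an orthogonal projection for
the Frobenius inner product, so `‖P_T(B)‖_F ≤ ‖B‖_F`. Moreover `P_T(B) = U (UᵀB) + ((I - UUᵀ) B V) Vᵀ`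
has rank at most `2r`. Cauchy–Schwarz over the nonzero singular values gives
`‖X‖_* ≤ √(rank X) ‖X‖_F` for every matrix `X`, and the theorem follows.
-/

open Matrix

noncomputable def singVals {m n : ℕ} (A : Matrix (Fin m) (Fin n) ℝ) : Fin n → ℝ :=
  fun i => Real.sqrt ((Matrix.isHermitian_conjTranspose_mul_self A).eigenvalues i)

noncomputable def nuclearNorm {m n : ℕ} (A : Matrix (Fin m) (Fin n) ℝ) : ℝ :=
  ∑ i, singVals A i

noncomputable def frobNorm {m n : ℕ} (A : Matrix (Fin m) (Fin n) ℝ) : ℝ :=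
  Real.sqrt (∑ i, ∑ j, (A i j) ^ 2)


/-- Projection onto the tangent space of the set of low-rank matrices at a
matrix with reduced SVD given by column-orthonormal `U` and `V`. -/
def PT {n₁ n₂ r : ℕ} (U : Matrix (Fin n₁) (Fin r) ℝ) (V : Matrix (Fin n₂) (Fin r) ℝ)
    (B : Matrix (Fin n₁) (Fin n₂) ℝ) : Matrix (Fin n₁) (Fin n₂) ℝ :=
  U * Uᵀ * B + B * (V * Vᵀ) - U * Uᵀ * B * (V * Vᵀ)

lemma Real.sum_sqrt_le_sqrt_card_mul_sqrt_sum {ι : Type*} [Fintype ι] (f : ι → ℝ)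
    (hf : ∀ i, 0 ≤ f i) :
    ∑ i, √(f i) ≤ √(Fintype.card {i // f i ≠ 0}) * √(∑ i, f i) := by
  classical
  have hsqrt : ∑ i with f i ≠ 0, √(f i) = ∑ i, √(f i) :=
    Finset.sum_filter_of_ne fun i _ h hi => h (by rw [hi, Real.sqrt_zero])
  calc ∑ i, √(f i) = ∑ i with f i ≠ 0, √1 * √(f i) := by
        simp only [Real.sqrt_one, one_mul, hsqrt]
    _ ≤ √(∑ i with f i ≠ 0, (1 : ℝ)) * √(∑ i with f i ≠ 0, f i) :=
        Real.sum_sqrt_mul_sqrt_le _ (fun _ => zero_le_one) hf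
    _ = √(Fintype.card {i // f i ≠ 0}) * √(∑ i, f i) := by
        rw [Finset.sum_filter_ne_zero, Fintype.card_subtype, Finset.sum_const, nsmul_one]

namespace Matrix

section Frobenius

variable {m n : Type*} [Fintype m] [Fintype n]

lemma trace_transpose_mul_self_eq_sum_sq (M : Matrix m n ℝ) :
    (Mᵀ * M).trace = ∑ i, ∑ j, M i j ^ 2 := by
  rw [Finset.sum_comm]
  simp [trace, mul_apply, sq]

lemma trace_transpose_mul_self_nonneg (M : Matrix m n ℝ) : 0 ≤ (Mᵀ * M).trace := by
  rw [trace_transpose_mul_self_eq_sum_sq]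
  positivity

lemma trace_transpose_mul_self_add_of_trace_eq_zero {X Y : Matrix m n ℝ}
    (h : (Xᵀ * Y).trace = 0) :
    ((X + Y)ᵀ * (X + Y)).trace = (Xᵀ * X).trace + (Yᵀ * Y).trace := by
  have h' : (Yᵀ * X).trace = 0 := by
    rw [← trace_transpose, transpose_mul, transpose_transpose, h]
  rw [transpose_add]
  simp only [Matrix.add_mul, Matrix.mul_add, trace_add, h, h']
  ring

/-- `B ↦ E B F` is self-adjoint and idempotent for `⟪X, Y⟫ = tr (Xᵀ Y)`, so `B - E B F` is
orthogonal to `E B F`. -/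
lemma trace_transpose_mul_self_sub_le {E : Matrix m m ℝ} {F : Matrix n n ℝ}
    (hE : E.IsSymm) (hE' : IsIdempotentElem E) (hF : F.IsSymm) (hF' : IsIdempotentElem F)
    (B : Matrix m n ℝ) :
    ((B - E * B * F)ᵀ * (B - E * B * F)).trace ≤ (Bᵀ * B).trace := by
  have horth : ((B - E * B * F)ᵀ * (E * B * F)).trace = 0 := by
    have hT : (B - E * B * F)ᵀ = Bᵀ - F * Bᵀ * E := by
      rw [transpose_sub, transpose_mul, transpose_mul, hE.eq, hF.eq, Matrix.mul_assoc]
    have hEE : F * Bᵀ * E * (E * B * F) = F * (Bᵀ * E * B * F) := by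
      simp only [Matrix.mul_assoc, ← Matrix.mul_assoc E E, hE'.eq]
    rw [hT, Matrix.sub_mul, hEE, trace_sub, trace_mul_comm F, Matrix.mul_assoc _ F F, hF'.eq]
    simp only [Matrix.mul_assoc, sub_self]
  have hpyth := trace_transpose_mul_self_add_of_trace_eq_zero horth
  rw [sub_add_cancel] at hpyth
  linarith [trace_transpose_mul_self_nonneg (E * B * F)]

end Frobenius

lemma isIdempotentElem_mul_transpose {k r : Type*} [Fintype k] [Fintype r] [DecidableEq r]
    {U : Matrix k r ℝ} (hU : Uᵀ * U = 1) : IsIdempotentElem (U * Uᵀ) := by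
  rw [IsIdempotentElem, Matrix.mul_assoc, ← Matrix.mul_assoc Uᵀ, hU, Matrix.one_mul]

lemma isSymm_mul_transpose {k r : Type*} [Fintype r] (U : Matrix k r ℝ) : (U * Uᵀ).IsSymm := by
  rw [IsSymm, transpose_mul, transpose_transpose]

end Matrix

section Norms

variable {m n : ℕ}

lemma frobNorm_eq_sqrt_trace (M : Matrix (Fin m) (Fin n) ℝ) : frobNorm M = √(Mᵀ * M).trace := by
  rw [frobNorm, trace_transpose_mul_self_eq_sum_sq]

lemma frobNorm_sub_le {E : Matrix (Fin m) (Fin m) ℝ} {F : Matrix (Fin n) (Fin n) ℝ}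
    (hE : E.IsSymm) (hE' : IsIdempotentElem E) (hF : F.IsSymm) (hF' : IsIdempotentElem F)
    (B : Matrix (Fin m) (Fin n) ℝ) : frobNorm (B - E * B * F) ≤ frobNorm B := by
  rw [frobNorm_eq_sqrt_trace, frobNorm_eq_sqrt_trace]
  exact Real.sqrt_le_sqrt (trace_transpose_mul_self_sub_le hE hE' hF hF' B)

lemma sum_eigenvalues_conjTranspose_mul_self (M : Matrix (Fin m) (Fin n) ℝ) :
    ∑ i, (isHermitian_conjTranspose_mul_self M).eigenvalues i = (Mᵀ * M).trace := by
  rw [← conjTranspose_eq_transpose_of_trivial,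
    (isHermitian_conjTranspose_mul_self M).trace_eq_sum_eigenvalues]
  simp

lemma nuclearNorm_le_sqrt_rank_mul_frobNorm (M : Matrix (Fin m) (Fin n) ℝ) :
    nuclearNorm M ≤ √M.rank * frobNorm M := by
  have hM := isHermitian_conjTranspose_mul_self M
  have hrank : M.rank = Fintype.card {i // hM.eigenvalues i ≠ 0} := by
    rw [← rank_conjTranspose_mul_self, hM.rank_eq_card_non_zero_eigs]
  rw [nuclearNorm, frobNorm_eq_sqrt_trace, ← sum_eigenvalues_conjTranspose_mul_self, hrank]
  exact Real.sum_sqrt_le_sqrt_card_mul_sqrt_sum _ (eigenvalues_conjTranspose_mul_self_nonneg M)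

end Norms

section TangentProjection

variable {n₁ n₂ r : ℕ} (U : Matrix (Fin n₁) (Fin r) ℝ) (V : Matrix (Fin n₂) (Fin r) ℝ)
  (B : Matrix (Fin n₁) (Fin n₂) ℝ)

lemma PT_eq_sub : PT U V B = B - (1 - U * Uᵀ) * B * (1 - V * Vᵀ) := by
  simp only [PT, Matrix.sub_mul, Matrix.mul_sub, Matrix.one_mul, Matrix.mul_one]
  abel

lemma frobNorm_PT_le (hU : Uᵀ * U = 1) (hV : Vᵀ * V = 1) : frobNorm (PT U V B) ≤ frobNorm B := by
  rw [PT_eq_sub]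
  exact frobNorm_sub_le (isSymm_one.sub (isSymm_mul_transpose U))
    (isIdempotentElem_mul_transpose hU).one_sub (isSymm_one.sub (isSymm_mul_transpose V))
    (isIdempotentElem_mul_transpose hV).one_sub B

lemma PT_eq_fromCols_mul_fromRows :
    PT U V B = fromCols U ((B - U * Uᵀ * B) * V) * fromRows (Uᵀ * B) Vᵀ := by
  rw [fromCols_mul_fromRows, PT, Matrix.sub_mul, Matrix.sub_mul]
  simp only [Matrix.mul_assoc]
  abel

lemma rank_PT_le : (PT U V B).rank ≤ 2 * r := by
  rw [PT_eq_fromCols_mul_fromRows]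
  calc _ ≤ (fromCols U ((B - U * Uᵀ * B) * V)).rank := rank_mul_le_left _ _
    _ ≤ Fintype.card (Fin r ⊕ Fin r) := rank_le_card_width _
    _ = 2 * r := by simp [two_mul]

end TangentProjection

theorem stmt13_general {n₁ n₂ r : ℕ} (A : Matrix (Fin n₁) (Fin n₂) ℝ)
    (U : Matrix (Fin n₁) (Fin r) ℝ) (V : Matrix (Fin n₂) (Fin r) ℝ)
    (hU : Uᵀ * U = 1) (hV : Vᵀ * V = 1)
    (hrank : A.rank = r)
    (B : Matrix (Fin n₁) (Fin n₂) ℝ) :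
    nuclearNorm (PT U V B) ≤ Real.sqrt (2 * A.rank) * frobNorm B := by
  rw [hrank]
  calc nuclearNorm (PT U V B) ≤ √(PT U V B).rank * frobNorm (PT U V B) :=
        nuclearNorm_le_sqrt_rank_mul_frobNorm _
    _ ≤ √(2 * r) * frobNorm B :=
        mul_le_mul (Real.sqrt_le_sqrt (by exact_mod_cast rank_PT_le U V B))
          (frobNorm_PT_le U V B hU hV) (Real.sqrt_nonneg _) (Real.sqrt_nonneg _)

/-- `‖P_T B‖_* ≤ √(2 rank A) ‖B‖_F`. -/
theorem stmt13 {n₁ n₂ r : ℕ} (A : Matrix (Fin n₁) (Fin n₂) ℝ)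
    (U : Matrix (Fin n₁) (Fin r) ℝ) (V : Matrix (Fin n₂) (Fin r) ℝ)
    (σ : Fin r → ℝ) (hσ : ∀ i, 0 < σ i)
    (hU : Uᵀ * U = 1) (hV : Vᵀ * V = 1)
    (hA : A = U * Matrix.diagonal σ * Vᵀ) (hrank : A.rank = r)
    (B : Matrix (Fin n₁) (Fin n₂) ℝ) :
    nuclearNorm (PT U V B) ≤ Real.sqrt (2 * A.rank) * frobNorm B :=
  stmt13_general A U V hU hV hrank B
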